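/- Let Q_1, …, Q_N be d×d Hermitian unitary complex matrices, p_1, …, p_N ∈ [0, 1] with p = max_i p_i, ρ a density matrix, and O a d×d complex matrix with ‖O‖ ≤ 1. For g ∈ ℝ define f(g) = Tr(ρ · (N_N^{(g)} ∘ ⋯ ∘ N_1^{(g)})(O)) with N_i^{(g)}(A) = (1 − g p_i) A + g p_i Q_i A Q_i. Let K ≥ 0 with K + 1 ≤ N, let g_0, …, g_K be pairwise distinct positive reals, and let β_ℓ = ∏_{m ≠ ℓ} g_m / (g_m − g_ℓ). Then |∑_{ℓ=0}^{K} β_ℓ f(g_ℓ) − Tr(ρ O)| ≤ ∑_{k=K+1}^{N} Γ_k · binom(N, k) · (2p)^k, where Γ_k = |∑_{ℓ=0}^{K} β_ℓ g_ℓ^k|. -/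

import Mathlib

/-!
Each amplified channel is `1 + g pᵢ Dᵢ` with `Dᵢ A = Qᵢ A Qᵢ - A`, so `f` is a polynomial
`∑ₖ gᵏ cₖ` of degree at most `N`, where `cₖ` is a sum of `N.choose k` terms `Tr(ρ D_S O)`
weighted by `∏_{i ∈ S} pᵢ`. Conjugation by a unitary is isometric, so `‖Dᵢ‖ ≤ 2`, and
`|Tr(ρ M)| ≤ ‖M‖` for a density matrix; hence `|cₖ| ≤ (N.choose k) (2p)ᵏ`. The Richardson
weights are the Lagrange basis polynomials of the nodes evaluated at `0`, so `∑ₗ βₗ gₗᵏ = 0ᵏ`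
for `k ≤ K`, and only the terms with `k > K` survive in `∑ₗ βₗ f(gₗ) - c₀`.
-/

open Finset

section Expansion

variable {𝕜 E ι : Type*} [NontriviallyNormedField 𝕜] [SeminormedAddCommGroup E] [NormedSpace 𝕜 E]

/-- The coefficient of `x ^ k` in the composite of the maps `1 + (x * p i) • D i` for `i ∈ L`,
the head of `L` being applied first. -/
noncomputable def expansionCoeff (D : ι → E →L[𝕜] E) (p : ι → 𝕜) :
    List ι → ℕ → E →L[𝕜] E
  | [], 0 => 1
  | [], _ + 1 => 0
  | _ :: L, 0 => expansionCoeff D p L 0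
  | i :: L, k + 1 => expansionCoeff D p L (k + 1) + p i • expansionCoeff D p L k * D i

variable (D : ι → E →L[𝕜] E) (p : ι → 𝕜)

@[simp]
lemma expansionCoeff_zero (L : List ι) : expansionCoeff D p L 0 = 1 := by
  induction L with
  | nil => rfl
  | cons i L ih => exact ih

lemma expansionCoeff_eq_zero_of_length_lt {L : List ι} {k : ℕ} (hk : L.length < k) :
    expansionCoeff D p L k = 0 := by
  induction L generalizing k with
  | nil => obtain _ | k := k <;> simp_all [expansionCoeff]
  | cons i L ih =>
    obtain _ | k := k
    · simp at hk
    · simp only [List.length_cons, add_lt_add_iff_right] at hk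
      simp [expansionCoeff, ih hk, ih (k := k + 1) (by omega)]

lemma foldl_eq_sum_expansionCoeff (x : 𝕜) (L : List ι) {n : ℕ} (hn : L.length ≤ n) (A : E) :
    L.foldl (fun B i => B + (x * p i) • D i B) A
      = ∑ k ∈ range (n + 1), x ^ k • expansionCoeff D p L k A := by
  induction L generalizing n A with
  | nil => simp [sum_range_succ', expansionCoeff]
  | cons i L ih =>
    obtain _ | m := n
    · simp at hn
    have hm : L.length ≤ m := by simpa using hn
    have hvanish : expansionCoeff D p L (m + 1) = 0 :=
      expansionCoeff_eq_zero_of_length_lt D p (by omega)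
    rw [List.foldl_cons, ih (n := m + 1) (by omega)]
    simp only [map_add, map_smul, smul_add, sum_add_distrib]
    rw [sum_range_succ' (fun k => x ^ k • expansionCoeff D p (i :: L) k A),
      sum_range_succ' (fun k => x ^ k • expansionCoeff D p L k A),
      sum_range_succ (fun k => x ^ k • (x * p i) • expansionCoeff D p L k (D i A)), hvanish]
    simp only [expansionCoeff, add_apply, smul_apply, mul_apply_eq_comp, zero_apply, smul_add,
      smul_smul, smul_zero, add_zero, sum_add_distrib, pow_succ, mul_assoc]
    abel

lemma norm_expansionCoeff_le {c r : ℝ} (hD : ∀ i, ‖D i‖ ≤ c) (hp : ∀ i, ‖p i‖ ≤ r)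
    (L : List ι) (k : ℕ) : ‖expansionCoeff D p L k‖ ≤ L.length.choose k * (c * r) ^ k := by
  induction L generalizing k with
  | nil =>
    cases k with
    | zero =>
      rw [List.length_nil, Nat.choose_self, Nat.cast_one, pow_zero, one_mul]
      exact ContinuousLinearMap.norm_id_le
    | succ k => simp [expansionCoeff]
  | cons i L ih =>
    cases k with
    | zero => simpa using ih 0
    | succ k =>
      have hc : 0 ≤ c := (norm_nonneg _).trans (hD i)
      have hr : 0 ≤ r := (norm_nonneg _).trans (hp i)
      calc ‖expansionCoeff D p (i :: L) (k + 1)‖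
          ≤ ‖expansionCoeff D p L (k + 1)‖ + ‖p i‖ * ‖expansionCoeff D p L k‖ * ‖D i‖ := by
            refine (norm_add_le _ _).trans (add_le_add le_rfl ?_)
            exact (norm_mul_le _ _).trans (by rw [norm_smul])
        _ ≤ L.length.choose (k + 1) * (c * r) ^ (k + 1)
              + r * (L.length.choose k * (c * r) ^ k) * c := by
            gcongr
            exacts [ih _, hp i, ih k, hD i]
        _ = (i :: L).length.choose (k + 1) * (c * r) ^ (k + 1) := by
            rw [List.length_cons, Nat.choose_succ_succ', Nat.cast_add]
            ring

end Expansion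

lemma sum_prod_div_sub_mul_pow_eq_zero_pow {F ι : Type*} [Field F] [DecidableEq ι]
    {s : Finset ι} {v : ι → F} (hv : Set.InjOn v s) {k : ℕ} (hk : k < #s) :
    ∑ i ∈ s, (∏ j ∈ s.erase i, v j / (v j - v i)) * v i ^ k = 0 ^ k := by
  have hX : (Polynomial.X ^ k : Polynomial F) = Lagrange.interpolate s v (fun i => v i ^ k) := by
    simpa using Lagrange.eq_interpolate hv (f := Polynomial.X ^ k)
      (by rw [Polynomial.degree_X_pow]; exact_mod_cast hk)
  have := congrArg (Polynomial.eval 0) hX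
  rw [Polynomial.eval_pow, Polynomial.eval_X, Lagrange.interpolate_apply,
    Polynomial.eval_finsetSum] at this
  rw [this]
  refine sum_congr rfl fun i _ => ?_
  simp only [Polynomial.eval_mul, Polynomial.eval_C, Lagrange.basis, Polynomial.eval_prod,
    Lagrange.basisDivisor, Polynomial.eval_sub, Polynomial.eval_X, zero_sub]
  rw [mul_comm]
  congr 1
  refine prod_congr rfl fun j _ => ?_
  rw [div_eq_mul_inv, ← neg_sub (v j), inv_neg]
  ring

lemma sum_mul_sum_sub_eq_sum_Icc {R ι : Type*} [CommRing R] [Fintype ι] (β g : ι → R)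
    (c : ℕ → R) {K N : ℕ} (hβ : ∀ k ≤ K, ∑ ℓ, β ℓ * g ℓ ^ k = 0 ^ k) :
    ∑ ℓ, β ℓ * ∑ k ∈ range (N + 1), g ℓ ^ k * c k - c 0
      = ∑ k ∈ Icc (K + 1) N, (∑ ℓ, β ℓ * g ℓ ^ k) * c k := by
  have hswap : ∑ ℓ, β ℓ * ∑ k ∈ range (N + 1), g ℓ ^ k * c k
      = ∑ k ∈ range (N + 1), (∑ ℓ, β ℓ * g ℓ ^ k) * c k := by
    simp only [mul_sum, sum_mul, mul_assoc]
    exact sum_comm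
  have hlow : ∑ k ∈ (range (N + 1)).filter (· ≤ K), (∑ ℓ, β ℓ * g ℓ ^ k) * c k = c 0 := by
    rw [sum_eq_single_of_mem 0 (by simp)]
    · rw [hβ 0 K.zero_le, pow_zero, one_mul]
    · intro k hk hk0
      simp [hβ k (mem_filter.1 hk).2, zero_pow hk0]
  have hhigh : (range (N + 1)).filter (fun k => ¬ k ≤ K) = Icc (K + 1) N := by
    ext k; simp; omega
  rw [hswap, ← sum_filter_add_sum_filter_not _ (· ≤ K), hlow, hhigh, add_sub_cancel_left]

lemma norm_richardson_sub_le {ι : Type*} [Fintype ι] (β g : ι → ℝ) (c : ℕ → ℂ) (b : ℕ → ℝ)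
    {K N : ℕ} (hβ : ∀ k ≤ K, ∑ ℓ, β ℓ * g ℓ ^ k = 0 ^ k) (hc : ∀ k, ‖c k‖ ≤ b k) :
    ‖∑ ℓ, (β ℓ : ℂ) * ∑ k ∈ range (N + 1), (g ℓ : ℂ) ^ k * c k - c 0‖
      ≤ ∑ k ∈ Icc (K + 1) N, |∑ ℓ, β ℓ * g ℓ ^ k| * b k := by
  rw [sum_mul_sum_sub_eq_sum_Icc _ _ _ fun k hk => by exact_mod_cast hβ k hk]
  refine (norm_sum_le _ _).trans (sum_le_sum fun k _ => ?_)
  have hΓ : ((∑ ℓ, β ℓ * g ℓ ^ k : ℝ) : ℂ) = ∑ ℓ, (β ℓ : ℂ) * (g ℓ : ℂ) ^ k := by push_cast; rfl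
  rw [norm_mul, ← hΓ, Complex.norm_real, Real.norm_eq_abs]
  exact mul_le_mul_of_nonneg_left (hc k) (abs_nonneg _)

open Matrix
open scoped Matrix.Norms.L2Operator ComplexOrder

namespace Matrix

variable {𝕜 n : Type*} [RCLike 𝕜] [Fintype n] [DecidableEq n]

lemma norm_apply_le_l2_opNorm (B : Matrix n n 𝕜) (i j : n) : ‖B i j‖ ≤ ‖B‖ := by
  let T := toEuclideanCLM (n := n) (𝕜 := 𝕜) B
  let e : EuclideanSpace 𝕜 n := EuclideanSpace.single j 1
  calc ‖B i j‖ = ‖(T e).ofLp i‖ := by simp [T, e, ofLp_toEuclideanCLM]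
    _ ≤ ‖T e‖ := PiLp.norm_apply_le _ i
    _ ≤ ‖T‖ * ‖e‖ := T.le_opNorm e
    _ = ‖B‖ := by simp [T, e, l2_opNorm_toEuclideanCLM]

lemma PosSemidef.norm_trace_mul_le {ρ : Matrix n n 𝕜} (hρ : ρ.PosSemidef) (M : Matrix n n 𝕜) :
    ‖(ρ * M).trace‖ ≤ ‖ρ.trace‖ * ‖M‖ := by
  set U := hρ.1.eigenvectorUnitary
  set ev := hρ.1.eigenvalues
  have hU : star (U : Matrix n n 𝕜) ∈ unitary (Matrix n n 𝕜) := (star U).2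
  have htrace : (ρ * M).trace = ∑ i, (ev i : 𝕜) * (star (U : Matrix n n 𝕜) * M * U) i i := by
    conv_lhs => rw [hρ.1.spectral_theorem, Unitary.conjStarAlgAut_apply]
    rw [mul_assoc, trace_mul_comm, ← mul_assoc, trace_mul_comm]
    simp [trace, diagonal_mul, U, ev]
  have hev : ‖ρ.trace‖ = ∑ i, ev i := by
    rw [hρ.1.trace_eq_sum_eigenvalues, ← RCLike.ofReal_sum, RCLike.norm_ofReal,
      abs_of_nonneg (sum_nonneg fun i _ => hρ.eigenvalues_nonneg i)]
  rw [htrace, hev, sum_mul]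
  refine (norm_sum_le _ _).trans (sum_le_sum fun i _ => ?_)
  rw [norm_mul, RCLike.norm_ofReal, abs_of_nonneg (hρ.eigenvalues_nonneg i)]
  refine mul_le_mul_of_nonneg_left ((norm_apply_le_l2_opNorm _ i i).trans_eq ?_)
    (hρ.eigenvalues_nonneg i)
  rw [CStarRing.norm_mul_mem_unitary _ U.2, CStarRing.norm_mem_unitary_mul _ hU]

end Matrix

lemma CStarRing.norm_mulLeftRight_sub_one_le {𝕜 E : Type*} [NontriviallyNormedField 𝕜]
    [NormedRing E] [StarRing E] [CStarRing E] [NormedAlgebra 𝕜 E] {U V : E}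
    (hU : U ∈ unitary E) (hV : V ∈ unitary E) :
    ‖ContinuousLinearMap.mulLeftRight 𝕜 E U V - 1‖ ≤ 2 := by
  refine ContinuousLinearMap.opNorm_le_bound _ zero_le_two fun A => ?_
  calc ‖U * A * V - A‖ ≤ ‖U * A * V‖ + ‖A‖ := norm_sub_le _ _
    _ = 2 * ‖A‖ := by
      rw [CStarRing.norm_mul_mem_unitary _ hV, CStarRing.norm_mem_unitary_mul _ hU, two_mul]

section PauliChannel

variable {n ι : Type*} [Fintype n] [DecidableEq n]

noncomputable def pauliGenerator (Q : Matrix n n ℂ) : Matrix n n ℂ →L[ℂ] Matrix n n ℂ :=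
  ContinuousLinearMap.mulLeftRight ℂ _ Q Q - 1

lemma foldl_pauliChannel_eq_sum_expansionCoeff (Q : ι → Matrix n n ℂ) (p : ι → ℝ) (x : ℝ)
    (L : List ι) (O : Matrix n n ℂ) :
    L.foldl (fun A i => (1 - (x * p i : ℝ)) • A + ((x * p i : ℝ) : ℂ) • (Q i * A * Q i)) O
      = ∑ k ∈ range (L.length + 1),
          (x : ℂ) ^ k • expansionCoeff (pauliGenerator ∘ Q) (fun i => (p i : ℂ)) L k O := by
  rw [← foldl_eq_sum_expansionCoeff _ _ _ _ le_rfl]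
  congr
  funext A i
  simp only [Function.comp_apply, pauliGenerator, _root_.sub_apply,
    ContinuousLinearMap.mulLeftRight_apply, one_apply_eq_self, ← Complex.coe_smul, smul_sub,
    sub_smul, one_smul]
  push_cast
  abel

lemma norm_expansionCoeff_pauli_le {Q : ι → Matrix n n ℂ} (hQ : ∀ i, Q i ∈ unitary (Matrix n n ℂ))
    {p : ι → ℝ} {r : ℝ} (hp₀ : ∀ i, 0 ≤ p i) (hp : ∀ i, p i ≤ r) (L : List ι) (k : ℕ) :
    ‖expansionCoeff (pauliGenerator ∘ Q) (fun i => (p i : ℂ)) L k‖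
      ≤ L.length.choose k * (2 * r) ^ k :=
  norm_expansionCoeff_le _ _ (fun i => CStarRing.norm_mulLeftRight_sub_one_le (hQ i) (hQ i))
    (fun i => by rw [Complex.norm_real, Real.norm_of_nonneg (hp₀ i)]; exact hp i) L k

end PauliChannel

theorem zne_compact_error_bound_general (d N K : ℕ)
    (Q : Fin N → Matrix (Fin d) (Fin d) ℂ)
    (hQ_herm : ∀ i, (Q i)ᴴ = Q i) (hQ_unit : ∀ i, Q i * Q i = 1)
    (p : Fin N → ℝ) (hp : ∀ i, p i ∈ Set.Icc (0 : ℝ) 1)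
    (pmax : ℝ) (hpmax_ub : ∀ i, p i ≤ pmax)
    (ρ O : Matrix (Fin d) (Fin d) ℂ)
    (hρ : ρ.PosSemidef) (hρ_tr : ρ.trace = 1) (hO : ‖O‖ ≤ 1)
    (g : Fin (K + 1) → ℝ) (hg_inj : Function.Injective g)
    (β : Fin (K + 1) → ℝ)
    (hβ : ∀ ℓ, β ℓ = ∏ m ∈ Finset.univ.erase ℓ, g m / (g m - g ℓ))
    (f : ℝ → ℂ)
    (hf : ∀ x : ℝ, f x = (ρ * (List.finRange N).foldl
        (fun A i => (1 - (x * p i : ℝ)) • A + ((x * p i : ℝ) : ℂ) • (Q i * A * Q i)) O).trace) :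
    ‖(∑ ℓ, (β ℓ : ℂ) * f (g ℓ)) - (ρ * O).trace‖
      ≤ ∑ k ∈ Finset.Icc (K + 1) N,
          |∑ ℓ, β ℓ * g ℓ ^ k| * (N.choose k : ℝ) * (2 * pmax) ^ k := by
  have hQ : ∀ i, Q i ∈ unitary (Matrix (Fin d) (Fin d) ℂ) := fun i =>
    Unitary.mem_iff.2 (by simp [star_eq_conjTranspose, hQ_herm, hQ_unit])
  have hrich : ∀ k ≤ K, ∑ ℓ, β ℓ * g ℓ ^ k = 0 ^ k := fun k hk => by
    simpa only [← hβ] using sum_prod_div_sub_mul_pow_eq_zero_pow (s := univ) hg_inj.injOn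
      (by simpa using Nat.lt_succ_of_le hk)
  set T := expansionCoeff (pauliGenerator ∘ Q) (fun i => (p i : ℂ)) (List.finRange N)
  have hf_poly : ∀ x : ℝ, f x = ∑ k ∈ range (N + 1), (x : ℂ) ^ k * (ρ * T k O).trace := by
    intro x
    rw [hf, foldl_pauliChannel_eq_sum_expansionCoeff, List.length_finRange, mul_sum, trace_sum]
    simp only [Matrix.mul_smul, trace_smul, smul_eq_mul, T]
  have hcoeff : ∀ k, ‖(ρ * T k O).trace‖ ≤ N.choose k * (2 * pmax) ^ k := fun k =>
    calc ‖(ρ * T k O).trace‖ ≤ ‖T k O‖ := by simpa [hρ_tr] using hρ.norm_trace_mul_le (T k O)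
      _ ≤ ‖T k‖ := ((T k).le_opNorm O).trans (mul_le_of_le_one_right (norm_nonneg _) hO)
      _ ≤ N.choose k * (2 * pmax) ^ k := by
        simpa [T] using
          norm_expansionCoeff_pauli_le hQ (fun i => (hp i).1) hpmax_ub (List.finRange N) k
  have hcoeff_zero : (ρ * T 0 O).trace = (ρ * O).trace := by simp [T]
  simp only [hf_poly, ← hcoeff_zero]
  simpa only [mul_assoc] using norm_richardson_sub_le β g _ _ hrich hcoeff

/-- **Compact zero-noise extrapolation error bound.**
Let `Q 1, …, Q N` be Hermitian unitary `d×d` complex matrices, `p i ∈ [0,1]` with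
`pmax = max_i p i`, `ρ` a density matrix, `O` with `‖O‖ ≤ 1`.  With
`f g = Tr(ρ (N_N^{(g)} ∘ ⋯ ∘ N_1^{(g)})(O))`, `K + 1 ≤ N`, pairwise distinct positive
nodes `g ℓ`, and Richardson weights `β ℓ = ∏_{m ≠ ℓ} g m / (g m − g ℓ)`, one has
`|∑ ℓ, β ℓ f (g ℓ) − Tr(ρ O)| ≤ ∑_{k=K+1}^{N} Γ_k (N choose k) (2 pmax)^k`, where
`Γ_k = |∑ ℓ, β ℓ (g ℓ)^k|`. -/
theorem zne_compact_error_bound (d N K : ℕ) (hKN : K + 1 ≤ N)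
    (Q : Fin N → Matrix (Fin d) (Fin d) ℂ)
    (hQ_herm : ∀ i, (Q i)ᴴ = Q i) (hQ_unit : ∀ i, Q i * Q i = 1)
    (p : Fin N → ℝ) (hp : ∀ i, p i ∈ Set.Icc (0 : ℝ) 1)
    (pmax : ℝ) (hpmax_ub : ∀ i, p i ≤ pmax) (hpmax_mem : ∃ i, p i = pmax)
    (ρ O : Matrix (Fin d) (Fin d) ℂ)
    (hρ : ρ.PosSemidef) (hρ_tr : ρ.trace = 1) (hO : ‖O‖ ≤ 1)
    (g : Fin (K + 1) → ℝ) (hg_inj : Function.Injective g) (hg_pos : ∀ ℓ, 0 < g ℓ)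
    (β : Fin (K + 1) → ℝ)
    (hβ : ∀ ℓ, β ℓ = ∏ m ∈ Finset.univ.erase ℓ, g m / (g m - g ℓ))
    (f : ℝ → ℂ)
    (hf : ∀ x : ℝ, f x = (ρ * (List.finRange N).foldl
        (fun A i => (1 - (x * p i : ℝ)) • A + ((x * p i : ℝ) : ℂ) • (Q i * A * Q i)) O).trace) :
    ‖(∑ ℓ, (β ℓ : ℂ) * f (g ℓ)) - (ρ * O).trace‖
      ≤ ∑ k ∈ Finset.Icc (K + 1) N,
          |∑ ℓ, β ℓ * g ℓ ^ k| * (N.choose k : ℝ) * (2 * pmax) ^ k :=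
  zne_compact_error_bound_general d N K Q hQ_herm hQ_unit p hp pmax hpmax_ub ρ O hρ hρ_tr hO g
    hg_inj β hβ f hf
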